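/- For every u ∈ ℝ³ with u ≠ 0 and sin‖u‖ ≠ 0, the matrix J_u = I₃ − ((1 − cos‖u‖)/‖u‖²) u^∧ + ((‖u‖ − sin‖u‖)/‖u‖³) (u^∧)² is invertible with inverse J_u⁻¹ = I₃ + (1/2) u^∧ + (1/‖u‖² − (1 + cos‖u‖)/(2‖u‖ sin‖u‖)) (u^∧)²; that is, the product of these two matrices equals I₃. -/

import Mathlib

open Matrix

noncomputable section

/-- The `hat` map sending `u ∈ ℝ³` to the skew-symmetric matrix `u^∧` with `u^∧ v = u × v`. -/
def hat (u : EuclideanSpace ℝ (Fin 3)) : Matrix (Fin 3) (Fin 3) ℝ :=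
  !![0, -u 2, u 1; u 2, 0, -u 0; -u 1, u 0, 0]

/-- `R ∈ SO(3)`: real 3×3 matrices with `RᵀR = I` and `det R = 1`. -/
def SO3 (R : Matrix (Fin 3) (Fin 3) ℝ) : Prop := Rᵀ * R = 1 ∧ R.det = 1

/-- Matrix-vector multiplication as a map on Euclidean space. -/
def matVec (A : Matrix (Fin 3) (Fin 3) ℝ) (u : EuclideanSpace ℝ (Fin 3)) :
    EuclideanSpace ℝ (Fin 3) :=
  (WithLp.equiv 2 (Fin 3 → ℝ)).symm (A.mulVec ((WithLp.equiv 2 (Fin 3 → ℝ)) u))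

/-- The left-trivialised Jacobian of the exponential map of `SO(3)` at `u`. -/
def Jmat (u : EuclideanSpace ℝ (Fin 3)) : Matrix (Fin 3) (Fin 3) ℝ :=
  1 - ((1 - Real.cos ‖u‖) / ‖u‖ ^ 2) • hat u
    + ((‖u‖ - Real.sin ‖u‖) / ‖u‖ ^ 3) • (hat u * hat u)

/-- The claimed inverse of the Jacobian `J_u`. -/
def JmatInv (u : EuclideanSpace ℝ (Fin 3)) : Matrix (Fin 3) (Fin 3) ℝ :=
  1 + (1 / 2 : ℝ) • hat u
    + (1 / ‖u‖ ^ 2 - (1 + Real.cos ‖u‖) / (2 * ‖u‖ * Real.sin ‖u‖)) • (hat u * hat u)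

/-!
Since `(u^∧)³ = -‖u‖² u^∧`, the matrices `1 + p u^∧ + q (u^∧)²` are closed under multiplication,
and their product is computed by a formula in the coefficients that is symmetric in the two
factors. Both products `J_u J_u⁻¹` and `J_u⁻¹ J_u` therefore reduce to the same two scalar
identities in `‖u‖`, which follow from `sin² + cos² = 1`.
-/

lemma hat_mul_hat_mul_hat (u : EuclideanSpace ℝ (Fin 3)) :
    hat u * hat u * hat u = (-‖u‖ ^ 2) • hat u := by
  have hnorm : ‖u‖ ^ 2 = u 0 ^ 2 + u 1 ^ 2 + u 2 ^ 2 := by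
    rw [EuclideanSpace.norm_eq, Real.sq_sqrt (by positivity)]
    simp [Fin.sum_univ_three, sq_abs]
  rw [hat, hnorm]
  ext i j
  fin_cases i <;> fin_cases j <;> simp [Matrix.mul_apply, Fin.sum_univ_three] <;> ring

lemma quadratic_mul_quadratic_of_cube_eq_smul {K R : Type*} [CommRing K] [Ring R]
    [Algebra K R] {A : R} {c : K} (hA : A * A * A = c • A) (p q r s : K) :
    (1 + p • A + q • (A * A)) * (1 + r • A + s • (A * A)) =
      1 + (p + r + c * (p * s + q * r)) • A + (q + s + p * r + c * q * s) • (A * A) := by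
  have hA3 : A * (A * A) = c • A := by rw [← mul_assoc, hA]
  have hA4 : A * A * (A * A) = c • (A * A) := by rw [← mul_assoc, hA, smul_mul_assoc]
  simp only [add_mul, mul_add, one_mul, mul_one, smul_mul_assoc, mul_smul_comm, smul_smul,
    hA, hA3, hA4]
  module

lemma jacobian_inverse_coeff_identities {θ : ℝ} (hθ : θ ≠ 0) (hs : Real.sin θ ≠ 0) :
    let a := -((1 - Real.cos θ) / θ ^ 2)
    let b := (θ - Real.sin θ) / θ ^ 3
    let d := 1 / θ ^ 2 - (1 + Real.cos θ) / (2 * θ * Real.sin θ)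
    a + 1 / 2 + -θ ^ 2 * (a * d + b * (1 / 2)) = 0 ∧
      b + d + a * (1 / 2) + -θ ^ 2 * b * d = 0 := by
  intro a b d
  have hpyth := Real.sin_sq_add_cos_sq θ
  constructor
  · simp only [a, b, d]
    field_simp
    linear_combination θ * hpyth
  · simp only [a, b, d]
    field_simp
    ring

theorem Jmat_mul_JmatInv_general (u : EuclideanSpace ℝ (Fin 3))
    (hs : Real.sin ‖u‖ ≠ 0) :
    Jmat u * JmatInv u = 1 ∧ JmatInv u * Jmat u = 1 := by
  have hnorm : ‖u‖ ≠ 0 := fun h => hs (by rw [h, Real.sin_zero])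
  obtain ⟨hlin, hquad⟩ := jacobian_inverse_coeff_identities hnorm hs
  have hJ : Jmat u = 1 + (-((1 - Real.cos ‖u‖) / ‖u‖ ^ 2)) • hat u
      + ((‖u‖ - Real.sin ‖u‖) / ‖u‖ ^ 3) • (hat u * hat u) := by
    rw [Jmat, sub_eq_add_neg, neg_smul]
  have hmul := quadratic_mul_quadratic_of_cube_eq_smul (hat_mul_hat_mul_hat u)
  have hleft : Jmat u * JmatInv u = 1 := by
    rw [hJ, JmatInv, hmul, hlin, hquad]
    simp
  refine ⟨hleft, ?_⟩
  rw [← hleft, hJ, JmatInv, hmul, hmul]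
  congr 3 <;> ring

/-- For `u ≠ 0` with `sin ‖u‖ ≠ 0`, the Jacobian `J_u` is invertible with the stated inverse:
the product of the two matrices equals `I₃`. -/
theorem Jmat_mul_JmatInv (u : EuclideanSpace ℝ (Fin 3)) (hu : u ≠ 0)
    (hs : Real.sin ‖u‖ ≠ 0) :
    Jmat u * JmatInv u = 1 ∧ JmatInv u * Jmat u = 1 :=
  Jmat_mul_JmatInv_general u hs
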